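/- Let T² be a Riemannian torus with systole sys ≥ C₀ > 0 and area Area(T²) ≤ S₀. Then T² contains two noncontractible closed curves, representing linearly independent (non-homologous) classes in H₁(T²;ℤ), each of length at most C = max{ 2S₀/(√3 C₀), S₀·√((2/√3)S₀ + S₀²/C₀²) / ((√3/2)C₀²) }. -/

import Mathlib

/-!
The lattice `ℤu ⊕ ℤv` has a reduced basis `w₁, w₂` of determinant one with `|w₁| ≤ |w₂|` and
`2|⟨w₁, w₂⟩| ≤ |w₁|²`; Lagrange's identity `det² + ⟨w₁, w₂⟩² = |w₁|²|w₂|²` then gives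
`√3 |w₁|² ≤ 2|det|` and `|w₁|²|w₂|² ≤ det² + |w₁|⁴/4`. Averaging over all parallel translates
(Fubini and periodicity) produces a straight loop in the class of `wᵢ` of length at most
`ℓᵢ = |wᵢ| λ̄`, where `λ̄` is the mean of `λ` over the flat torus, and Cauchy–Schwarz gives
`|det| λ̄² ≤ Area ≤ S₀`. So `C₀ ≤ ℓ₁` by the systole, `√3 ℓ₁² ≤ 2S₀` (Loewner's inequality) and
`ℓ₁²ℓ₂² ≤ S₀² + ℓ₁⁴/4`, which bound `ℓ₁` and `ℓ₂` as claimed.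
-/

open MeasureTheory

/-- A closed curve on the torus `ℝ²/(ℤu ⊕ ℤv)` with homology class `(m,n)`:
a path `c : ℝ → ℝ²` satisfying `c 1 = c 0 + m•u + n•v`. -/
def IsTorusLoop (u v : ℝ × ℝ) (c : ℝ → ℝ × ℝ) (m n : ℤ) : Prop :=
  Differentiable ℝ c ∧ c 1 = c 0 + ((m : ℝ) • u + (n : ℝ) • v)

/-- Length of the curve `c` on `[0,1]` in the conformally flat metric `λ² g₀`. -/
noncomputable def torusLength (lam : ℝ × ℝ → ℝ) (c : ℝ → ℝ × ℝ) : ℝ :=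
  ∫ t in (0 : ℝ)..1, lam (c t) * ‖deriv c t‖

/-- The systole: infimum of lengths of noncontractible closed curves. -/
noncomputable def torusSystole (u v : ℝ × ℝ) (lam : ℝ × ℝ → ℝ) : ℝ :=
  sInf {L : ℝ | ∃ c : ℝ → ℝ × ℝ, ∃ m n : ℤ, (m, n) ≠ (0, 0) ∧
    IsTorusLoop u v c m n ∧ L = torusLength lam c}

/-- The Riemannian area of the torus in the metric `λ² g₀`, computed over a
fundamental parallelogram with Euclidean area `|u₁v₂ − u₂v₁|`. -/
noncomputable def torusArea (u v : ℝ × ℝ) (lam : ℝ × ℝ → ℝ) : ℝ :=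
  ∫ x in (0 : ℝ)..1, ∫ y in (0 : ℝ)..1,
    (lam (x • u + y • v)) ^ 2 * |u.1 * v.2 - u.2 * v.1|

-- `ℝ × ℝ` carries the sup norm; the lattice geometry below is Euclidean.
def planeDot (a b : ℝ × ℝ) : ℝ := a.1 * b.1 + a.2 * b.2

def planeCross (a b : ℝ × ℝ) : ℝ := a.1 * b.2 - a.2 * b.1

noncomputable def latticeVec (u v : ℝ × ℝ) (q : ℤ × ℤ) : ℝ × ℝ := (q.1 : ℝ) • u + (q.2 : ℝ) • v

theorem planeDot_self_nonneg (a : ℝ × ℝ) : 0 ≤ planeDot a a :=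
  add_nonneg (mul_self_nonneg _) (mul_self_nonneg _)

theorem planeCross_sq_add_planeDot_sq (a b : ℝ × ℝ) :
    planeCross a b ^ 2 + planeDot a b ^ 2 = planeDot a a * planeDot b b := by
  unfold planeCross planeDot; ring

theorem sq_planeCross_le (a b : ℝ × ℝ) : planeCross a b ^ 2 ≤ planeDot a a * planeDot b b := by
  nlinarith [planeCross_sq_add_planeDot_sq a b, sq_nonneg (planeDot a b)]

theorem norm_le_sqrt_planeDot_self (a : ℝ × ℝ) : ‖a‖ ≤ √(planeDot a a) := by
  refine max_le ?_ ?_ <;> rw [Real.norm_eq_abs, ← Real.sqrt_sq_eq_abs] <;>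
    exact Real.sqrt_le_sqrt (by unfold planeDot; nlinarith [sq_nonneg a.1, sq_nonneg a.2])

theorem planeCross_latticeVec (u v : ℝ × ℝ) (q r : ℤ × ℤ) :
    planeCross (latticeVec u v q) (latticeVec u v r) =
      ((q.1 * r.2 - r.1 * q.2 : ℤ) : ℝ) * planeCross u v := by
  simp only [planeCross, latticeVec, Prod.fst_add, Prod.snd_add, Prod.smul_fst, Prod.smul_snd,
    smul_eq_mul]
  push_cast; ring

theorem planeDot_latticeVec_sub_smul (u v : ℝ × ℝ) (q r : ℤ × ℤ) (k : ℤ) :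
    planeDot (latticeVec u v q) (latticeVec u v (r - k • q)) =
      planeDot (latticeVec u v q) (latticeVec u v r) -
        k * planeDot (latticeVec u v q) (latticeVec u v q) := by
  simp only [planeDot, latticeVec, Prod.fst_add, Prod.snd_add, Prod.smul_fst, Prod.smul_snd,
    Prod.fst_sub, Prod.snd_sub, smul_eq_mul]
  push_cast; ring

theorem planeDot_latticeVec_smul (u v : ℝ × ℝ) (q : ℤ × ℤ) (g : ℤ) :
    planeDot (latticeVec u v (g • q)) (latticeVec u v (g • q)) =
      g ^ 2 * planeDot (latticeVec u v q) (latticeVec u v q) := by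
  simp only [planeDot, latticeVec, Prod.fst_add, Prod.snd_add, Prod.smul_fst, Prod.smul_snd,
    smul_eq_mul]
  push_cast; ring

theorem planeCross_latticeVec_right (u v : ℝ × ℝ) (q : ℤ × ℤ) :
    planeCross (latticeVec u v q) v = q.1 * planeCross u v := by
  simp only [planeCross, latticeVec, Prod.fst_add, Prod.snd_add, Prod.smul_fst, Prod.smul_snd,
    smul_eq_mul]
  ring

theorem planeCross_left_latticeVec (u v : ℝ × ℝ) (q : ℤ × ℤ) :
    planeCross u (latticeVec u v q) = q.2 * planeCross u v := by
  simp only [planeCross, latticeVec, Prod.fst_add, Prod.snd_add, Prod.smul_fst, Prod.smul_snd,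
    smul_eq_mul]
  ring

section Lattice

variable {u v : ℝ × ℝ}

theorem planeDot_latticeVec_pos (huv : planeCross u v ≠ 0) {q : ℤ × ℤ} (hq : q ≠ 0) :
    0 < planeDot (latticeVec u v q) (latticeVec u v q) := by
  refine (planeDot_self_nonneg _).lt_of_ne' fun h => hq ?_
  have h₁ := sq_planeCross_le (latticeVec u v q) v
  have h₂ := sq_planeCross_le u (latticeVec u v q)
  rw [h, zero_mul, planeCross_latticeVec_right] at h₁
  rw [h, mul_zero, planeCross_left_latticeVec] at h₂
  replace h₁ := pow_eq_zero_iff two_ne_zero |>.1 (le_antisymm h₁ (sq_nonneg _))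
  replace h₂ := pow_eq_zero_iff two_ne_zero |>.1 (le_antisymm h₂ (sq_nonneg _))
  simp only [mul_eq_zero, huv, or_false, Int.cast_eq_zero] at h₁ h₂
  exact Prod.ext h₁ h₂

theorem finite_setOf_planeDot_latticeVec_le (huv : planeCross u v ≠ 0) (R : ℝ) :
    {q : ℤ × ℤ | planeDot (latticeVec u v q) (latticeVec u v q) ≤ R}.Finite := by
  set K := R * (planeDot u u + planeDot v v) / planeCross u v ^ 2
  refine (Set.finite_Icc (-⌈K⌉, -⌈K⌉) (⌈K⌉, ⌈K⌉)).subset fun q hq => ?_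
  have hR : 0 ≤ R := (planeDot_self_nonneg _).trans hq
  have hbound : ∀ z : ℤ, ((z : ℝ) * planeCross u v) ^ 2 ≤ R * (planeDot u u + planeDot v v) →
      -⌈K⌉ ≤ z ∧ z ≤ ⌈K⌉ := fun z hz => by
    have hK : (z : ℝ) ^ 2 ≤ K := by
      rw [le_div_iff₀ (by positivity)]
      linarith [mul_pow (z : ℝ) (planeCross u v) 2]
    have hK' : z ^ 2 ≤ ⌈K⌉ := by exact_mod_cast hK.trans (Int.le_ceil K)
    constructor <;> nlinarith [Int.le_self_sq z, Int.le_self_sq (-z)]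
  have h₁ := sq_planeCross_le (latticeVec u v q) v
  have h₂ := sq_planeCross_le u (latticeVec u v q)
  rw [planeCross_latticeVec_right] at h₁
  rw [planeCross_left_latticeVec] at h₂
  replace hq : planeDot (latticeVec u v q) (latticeVec u v q) ≤ R := hq
  have hu := planeDot_self_nonneg u
  have hv := planeDot_self_nonneg v
  obtain ⟨h₁l, h₁r⟩ := hbound q.1 (by nlinarith)
  obtain ⟨h₂l, h₂r⟩ := hbound q.2 (by nlinarith)
  exact ⟨⟨h₁l, h₂l⟩, ⟨h₁r, h₂r⟩⟩

theorem exists_min_planeDot_latticeVec (huv : planeCross u v ≠ 0) :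
    ∃ q ≠ 0, ∀ r ≠ 0, planeDot (latticeVec u v q) (latticeVec u v q) ≤
      planeDot (latticeVec u v r) (latticeVec u v r) := by
  set N := fun q => planeDot (latticeVec u v q) (latticeVec u v q)
  have hfin : {q : ℤ × ℤ | q ≠ 0 ∧ N q ≤ N (1, 0)}.Finite :=
    (finite_setOf_planeDot_latticeVec_le huv _).subset fun q hq => hq.2
  obtain ⟨q, ⟨hq, hq₁⟩, hmin⟩ := Set.exists_min_image _ N hfin ⟨(1, 0), by simp⟩
  exact ⟨q, hq, fun r hr => (le_total (N r) (N (1, 0))).elim (fun h => hmin r ⟨hr, h⟩)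
    fun h => hq₁.trans h⟩

theorem isCoprime_of_planeDot_latticeVec_min (huv : planeCross u v ≠ 0) {q : ℤ × ℤ} (hq : q ≠ 0)
    (hmin : ∀ r ≠ 0, planeDot (latticeVec u v q) (latticeVec u v q) ≤
      planeDot (latticeVec u v r) (latticeVec u v r)) :
    IsCoprime q.1 q.2 := by
  rw [Int.isCoprime_iff_gcd_eq_one]
  obtain ⟨a, ha⟩ := Int.gcd_dvd_left q.1 q.2
  obtain ⟨b, hb⟩ := Int.gcd_dvd_right q.1 q.2
  have hq' : q = (Int.gcd q.1 q.2 : ℤ) • (a, b) := Prod.ext ha hb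
  have hab : (a, b) ≠ 0 := fun h => hq (by rw [hq', h, smul_zero])
  have hle := hmin _ hab
  rw [hq', planeDot_latticeVec_smul] at hle
  have hg : ((Int.gcd q.1 q.2 : ℤ) : ℝ) ^ 2 ≤ 1 := by
    nlinarith [planeDot_latticeVec_pos huv hab]
  have hg0 : Int.gcd q.1 q.2 ≠ 0 := fun h => hq (by rw [hq', h, Nat.cast_zero, zero_smul])
  have hg1 : Int.gcd q.1 q.2 ≤ 1 := by simpa using hg
  omega

theorem exists_reduced_basis (huv : planeCross u v ≠ 0) :
    ∃ q₁ q₂ : ℤ × ℤ, q₁ ≠ 0 ∧ q₂ ≠ 0 ∧ q₁.1 * q₂.2 - q₂.1 * q₁.2 = 1 ∧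
      planeDot (latticeVec u v q₁) (latticeVec u v q₁) ≤
        planeDot (latticeVec u v q₂) (latticeVec u v q₂) ∧
      2 * |planeDot (latticeVec u v q₁) (latticeVec u v q₂)| ≤
        planeDot (latticeVec u v q₁) (latticeVec u v q₁) := by
  obtain ⟨q, hq, hmin⟩ := exists_min_planeDot_latticeVec huv
  obtain ⟨a, b, hab⟩ := isCoprime_of_planeDot_latticeVec_min huv hq hmin
  set N := planeDot (latticeVec u v q) (latticeVec u v q)
  -- Bézout completes `q` to a unimodular basis `(q, r)`; subtracting the nearest multiple of `q`
  -- from `r` makes the pair reduced.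
  set r : ℤ × ℤ := (-b, a)
  set k := round (planeDot (latticeVec u v q) (latticeVec u v r) / N)
  have hdet : q.1 * (r - k • q).2 - (r - k • q).1 * q.2 = 1 := by
    simp only [r, Prod.fst_sub, Prod.snd_sub, Prod.smul_fst, Prod.smul_snd, smul_eq_mul]
    linear_combination hab
  have hq₂ : r - k • q ≠ 0 := fun h => by rw [h] at hdet; simp at hdet
  refine ⟨q, r - k • q, hq, hq₂, hdet, hmin _ hq₂, ?_⟩
  have hN : 0 < N := planeDot_latticeVec_pos huv hq
  have hk := abs_sub_round (planeDot (latticeVec u v q) (latticeVec u v r) / N)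
  have hsplit : planeDot (latticeVec u v q) (latticeVec u v r) - k * N =
      (planeDot (latticeVec u v q) (latticeVec u v r) / N - k) * N := by field_simp
  rw [planeDot_latticeVec_sub_smul, hsplit, abs_mul, abs_of_pos hN]
  nlinarith

end Lattice

theorem three_mul_sq_planeDot_le_of_reduced {a b : ℝ × ℝ} (hab : planeDot a a ≤ planeDot b b)
    (hdot : 2 * |planeDot a b| ≤ planeDot a a) :
    3 * planeDot a a ^ 2 ≤ 4 * planeCross a b ^ 2 := by
  nlinarith [planeCross_sq_add_planeDot_sq a b, sq_abs (planeDot a b), abs_nonneg (planeDot a b),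
    planeDot_self_nonneg a]

theorem planeDot_mul_planeDot_le_of_reduced {a b : ℝ × ℝ}
    (hdot : 2 * |planeDot a b| ≤ planeDot a a) :
    planeDot a a * planeDot b b ≤ planeCross a b ^ 2 + planeDot a a ^ 2 / 4 := by
  nlinarith [planeCross_sq_add_planeDot_sq a b, sq_abs (planeDot a b), abs_nonneg (planeDot a b)]

instance isProbabilityMeasure_restrict_Ioc_zero_one :
    IsProbabilityMeasure (volume.restrict (Set.Ioc (0 : ℝ) 1)) := ⟨by simp⟩

theorem exists_le_intervalIntegral_zero_one {f : ℝ → ℝ} (hf : IntervalIntegrable f volume 0 1) :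
    ∃ x, f x ≤ ∫ t in (0 : ℝ)..1, f t := by
  rw [intervalIntegral.integral_of_le zero_le_one]
  exact exists_le_integral hf.1

theorem sq_intervalIntegral_zero_one_le {f : ℝ → ℝ} (hf : IntervalIntegrable f volume 0 1)
    (hf₂ : IntervalIntegrable (fun t => f t ^ 2) volume 0 1) :
    (∫ t in (0 : ℝ)..1, f t) ^ 2 ≤ ∫ t in (0 : ℝ)..1, f t ^ 2 := by
  simp only [intervalIntegral.integral_of_le zero_le_one]
  exact (even_two.convexOn_pow).map_integral_le (continuous_pow 2).continuousOn isClosed_univ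
    (Filter.Eventually.of_forall fun _ => Set.mem_univ _) hf.1 hf₂.1

theorem intervalIntegral_swap_of_continuous {F : ℝ → ℝ → ℝ} (hF : Continuous F.uncurry)
    (a b c d : ℝ) :
    ∫ x in a..b, ∫ y in c..d, F x y = ∫ y in c..d, ∫ x in a..b, F x y :=
  intervalIntegral_intervalIntegral_swap <|
    (hF.continuousOn.integrableOn_compact (isCompact_uIcc.prod isCompact_uIcc)).mono_set
      (Set.prod_mono Set.uIoc_subset_uIcc Set.uIoc_subset_uIcc)

theorem Function.Periodic.intervalIntegral_comp_add {f : ℝ → ℝ} {T : ℝ}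
    (hf : Function.Periodic f T) (a : ℝ) :
    ∫ x in (0 : ℝ)..T, f (x + a) = ∫ x in (0 : ℝ)..T, f x := by
  rw [intervalIntegral.integral_comp_add_right, zero_add, add_comm T a]
  simpa using hf.intervalIntegral_add_eq a 0

section DoublyPeriodic

variable {F : ℝ → ℝ → ℝ}

theorem integral_integral_lineIntegral_eq (hF : Continuous F.uncurry)
    (h₁ : ∀ y, Function.Periodic (F · y) 1) (h₂ : ∀ x, Function.Periodic (F x) 1) (a b : ℝ) :
    ∫ x in (0 : ℝ)..1, ∫ y in (0 : ℝ)..1, ∫ t in (0 : ℝ)..1, F (x + t * a) (y + t * b) =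
      ∫ x in (0 : ℝ)..1, ∫ y in (0 : ℝ)..1, F x y := by
  set G := fun x => ∫ y in (0 : ℝ)..1, F x y
  have hG : Continuous G :=
    intervalIntegral.continuous_parametric_intervalIntegral_of_continuous' hF 0 1
  have hGper : Function.Periodic G 1 := fun x => intervalIntegral.integral_congr fun y _ => h₁ y x
  calc ∫ x in (0 : ℝ)..1, ∫ y in (0 : ℝ)..1, ∫ t in (0 : ℝ)..1, F (x + t * a) (y + t * b)
      = ∫ x in (0 : ℝ)..1, ∫ t in (0 : ℝ)..1, G (x + t * a) :=
        intervalIntegral.integral_congr fun x _ => by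
          rw [intervalIntegral_swap_of_continuous (F := fun y t => F (x + t * a) (y + t * b))
            (hF.comp₂ (by fun_prop) (by fun_prop))]
          exact intervalIntegral.integral_congr fun t _ => (h₂ _).intervalIntegral_comp_add _
    _ = ∫ t in (0 : ℝ)..1, ∫ x in (0 : ℝ)..1, G (x + t * a) :=
        intervalIntegral_swap_of_continuous (F := fun x t => G (x + t * a))
          (hG.comp (by fun_prop)) _ _ _ _
    _ = ∫ x in (0 : ℝ)..1, G x := by
        simp only [hGper.intervalIntegral_comp_add, intervalIntegral.integral_const, sub_zero,
          one_smul]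

theorem exists_lineIntegral_le (hF : Continuous F.uncurry)
    (h₁ : ∀ y, Function.Periodic (F · y) 1) (h₂ : ∀ x, Function.Periodic (F x) 1) (a b : ℝ) :
    ∃ x y, ∫ t in (0 : ℝ)..1, F (x + t * a) (y + t * b) ≤
      ∫ x in (0 : ℝ)..1, ∫ y in (0 : ℝ)..1, F x y := by
  set L := fun x y => ∫ t in (0 : ℝ)..1, F (x + t * a) (y + t * b)
  have hL : Continuous L.uncurry :=
    intervalIntegral.continuous_parametric_intervalIntegral_of_continuous' (μ := volume)
      (f := fun (p : ℝ × ℝ) t => F (p.1 + t * a) (p.2 + t * b))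
      (hF.comp₂ (by fun_prop) (by fun_prop)) 0 1
  obtain ⟨x, hx⟩ := exists_le_intervalIntegral_zero_one
    ((intervalIntegral.continuous_parametric_intervalIntegral_of_continuous' (μ := volume)
      hL 0 1).intervalIntegrable 0 1)
  obtain ⟨y, hy⟩ := exists_le_intervalIntegral_zero_one
    ((hL.comp (Continuous.prodMk_right x)).intervalIntegrable 0 1)
  exact ⟨x, y, hy.trans (hx.trans (integral_integral_lineIntegral_eq hF h₁ h₂ a b).le)⟩

end DoublyPeriodic

theorem sq_integral_integral_le {F : ℝ → ℝ → ℝ} (hF : Continuous F.uncurry) :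
    (∫ x in (0 : ℝ)..1, ∫ y in (0 : ℝ)..1, F x y) ^ 2 ≤
      ∫ x in (0 : ℝ)..1, ∫ y in (0 : ℝ)..1, F x y ^ 2 := by
  have hG := intervalIntegral.continuous_parametric_intervalIntegral_of_continuous'
    (μ := volume) hF 0 1
  have hG₂ := intervalIntegral.continuous_parametric_intervalIntegral_of_continuous'
    (μ := volume) (f := fun x y => F x y ^ 2) (by exact hF.pow 2) 0 1
  refine (sq_intervalIntegral_zero_one_le (hG.intervalIntegrable 0 1)
    ((hG.pow 2).intervalIntegrable 0 1)).trans ?_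
  refine intervalIntegral.integral_mono_on zero_le_one ((hG.pow 2).intervalIntegrable 0 1)
    (hG₂.intervalIntegrable 0 1) fun x _ => sq_intervalIntegral_zero_one_le ?_ ?_
  · exact (hF.comp (Continuous.prodMk_right x)).intervalIntegrable 0 1
  · exact ((hF.pow 2).comp (Continuous.prodMk_right x)).intervalIntegrable 0 1

noncomputable def torusMean (u v : ℝ × ℝ) (lam : ℝ × ℝ → ℝ) : ℝ :=
  ∫ x in (0 : ℝ)..1, ∫ y in (0 : ℝ)..1, lam (x • u + y • v)

theorem torusLength_line (lam : ℝ × ℝ → ℝ) (p w : ℝ × ℝ) :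
    torusLength lam (fun t => p + t • w) = (∫ t in (0 : ℝ)..1, lam (p + t • w)) * ‖w‖ := by
  have hderiv : ∀ t : ℝ, deriv (fun t => p + t • w) t = w := fun t => by
    simpa using (((hasDerivAt_id t).smul_const w).const_add p).deriv
  simp only [torusLength, hderiv, intervalIntegral.integral_mul_const]

theorem isTorusLoop_line (u v p : ℝ × ℝ) (m n : ℤ) :
    IsTorusLoop u v (fun t => p + t • latticeVec u v (m, n)) m n :=
  ⟨by fun_prop, by simp [latticeVec]⟩

section Torus

variable {u v : ℝ × ℝ} {lam : ℝ × ℝ → ℝ}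

theorem torusMean_nonneg (hlam : ∀ p, 0 ≤ lam p) : 0 ≤ torusMean u v lam :=
  intervalIntegral.integral_nonneg zero_le_one fun _ _ =>
    intervalIntegral.integral_nonneg zero_le_one fun _ _ => hlam _

theorem torusSystole_le_torusLength (hlam : ∀ p, 0 ≤ lam p) {c : ℝ → ℝ × ℝ} {m n : ℤ}
    (hc : IsTorusLoop u v c m n) (hmn : (m, n) ≠ (0, 0)) :
    torusSystole u v lam ≤ torusLength lam c := by
  refine csInf_le ⟨0, ?_⟩ ⟨c, m, n, hmn, hc, rfl⟩
  rintro _ ⟨c, m, n, -, -, rfl⟩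
  exact intervalIntegral.integral_nonneg zero_le_one fun t _ => mul_nonneg (hlam _) (norm_nonneg _)

theorem exists_torusLoop_length_le (hlam : ∀ p, 0 ≤ lam p) (hcont : Continuous lam)
    (hper_u : ∀ p, lam (p + u) = lam p) (hper_v : ∀ p, lam (p + v) = lam p) (q : ℤ × ℤ) :
    ∃ c, IsTorusLoop u v c q.1 q.2 ∧
      torusLength lam c ≤
        √(planeDot (latticeVec u v q) (latticeVec u v q)) * torusMean u v lam := by
  set F := fun x y : ℝ => lam (x • u + y • v)
  have hF : Continuous F.uncurry := hcont.comp (by fun_prop)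
  have h₁ : ∀ y, Function.Periodic (F · y) 1 := fun y x => by
    simp only [F, add_smul, one_smul, add_right_comm _ u, hper_u]
  have h₂ : ∀ x, Function.Periodic (F x) 1 := fun x y => by
    simp only [F, add_smul, one_smul, ← add_assoc, hper_v]
  obtain ⟨x, y, hxy⟩ := exists_lineIntegral_le hF h₁ h₂ q.1 q.2
  refine ⟨_, isTorusLoop_line u v (x • u + y • v) q.1 q.2, ?_⟩
  have hline : ∀ t : ℝ,
      lam (x • u + y • v + t • latticeVec u v q) = F (x + t * q.1) (y + t * q.2) :=
    fun t => by simp only [F, latticeVec]; congr 1; module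
  rw [torusLength_line, mul_comm]
  simp only [hline]
  exact mul_le_mul (norm_le_sqrt_planeDot_self _) hxy
    (intervalIntegral.integral_nonneg zero_le_one fun _ _ => hlam _) (Real.sqrt_nonneg _)

theorem abs_planeCross_mul_sq_torusMean_le_torusArea (hcont : Continuous lam) :
    |planeCross u v| * torusMean u v lam ^ 2 ≤ torusArea u v lam := by
  have harea : torusArea u v lam =
      |planeCross u v| * ∫ x in (0 : ℝ)..1, ∫ y in (0 : ℝ)..1, lam (x • u + y • v) ^ 2 := by
    simp only [torusArea, intervalIntegral.integral_mul_const]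
    exact mul_comm _ _
  rw [harea]
  exact mul_le_mul_of_nonneg_left (sq_integral_integral_le (hcont.comp (by fun_prop)))
    (abs_nonneg _)

end Torus

theorem reduced_length_bounds {a b : ℝ × ℝ} {I S₀ : ℝ} (hab : planeDot a a ≤ planeDot b b)
    (hdot : 2 * |planeDot a b| ≤ planeDot a a) (harea : |planeCross a b| * I ^ 2 ≤ S₀) :
    √3 * (√(planeDot a a) * I) ^ 2 ≤ 2 * S₀ ∧
      (√(planeDot a a) * I) ^ 2 * (√(planeDot b b) * I) ^ 2 ≤
        S₀ ^ 2 + ((√(planeDot a a) * I) ^ 2) ^ 2 / 4 := by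
  have hherm := three_mul_sq_planeDot_le_of_reduced hab hdot
  have hlag := planeDot_mul_planeDot_le_of_reduced hdot
  simp only [mul_pow, Real.sq_sqrt (planeDot_self_nonneg _)]
  have ha := planeDot_self_nonneg a
  have hA : 0 ≤ |planeCross a b| * I ^ 2 := by positivity
  constructor
  · have hs3 : √3 * planeDot a a ≤ 2 * |planeCross a b| := by
      refine (pow_le_pow_iff_left₀ (by positivity) (by positivity) two_ne_zero).1 ?_
      rw [mul_pow, mul_pow, Real.sq_sqrt (by norm_num), sq_abs]
      linarith
    nlinarith [mul_le_mul_of_nonneg_right hs3 (sq_nonneg I)]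
  · have hI4 : 0 ≤ (I ^ 2) ^ 2 := by positivity
    nlinarith [mul_le_mul_of_nonneg_right hlag hI4, sq_abs (planeCross a b),
      mul_self_le_mul_self hA harea]

theorem le_two_mul_div_of_sqrt_three_mul_sq_le {ℓ C₀ S₀ : ℝ} (hC₀ : 0 < C₀) (hℓ : C₀ ≤ ℓ)
    (h : √3 * ℓ ^ 2 ≤ 2 * S₀) : ℓ ≤ 2 * S₀ / (√3 * C₀) := by
  rw [le_div_iff₀ (by positivity)]
  nlinarith [mul_nonneg (mul_nonneg (Real.sqrt_nonneg 3) (hC₀.le.trans hℓ)) (sub_nonneg.2 hℓ)]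

theorem le_mul_sqrt_div_of_sq_mul_sq_le {ℓ₁ ℓ₂ C₀ S₀ : ℝ} (hC₀ : 0 < C₀) (hℓ₁ : C₀ ≤ ℓ₁) (hℓ₂ : 0 ≤ ℓ₂)
    (h₁ : √3 * ℓ₁ ^ 2 ≤ 2 * S₀) (h₁₂ : ℓ₁ ^ 2 * ℓ₂ ^ 2 ≤ S₀ ^ 2 + (ℓ₁ ^ 2) ^ 2 / 4) :
    ℓ₂ ≤ S₀ * √(2 / √3 * S₀ + S₀ ^ 2 / C₀ ^ 2) / (√3 / 2 * C₀ ^ 2) := by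
  have hs3 : 0 < √3 := by positivity
  have hC₀ℓ : C₀ ^ 2 ≤ ℓ₁ ^ 2 := pow_le_pow_left₀ hC₀.le hℓ₁ 2
  have hℓ₁sq : 0 < ℓ₁ ^ 2 := pow_pos (hC₀.trans_le hℓ₁) 2
  have hS₀ : √3 / 2 * C₀ ^ 2 ≤ S₀ := by nlinarith
  have hℓ₂sq : ℓ₂ ^ 2 ≤ 2 / √3 * S₀ + S₀ ^ 2 / C₀ ^ 2 := by
    have hsplit : ℓ₂ ^ 2 ≤ S₀ ^ 2 / ℓ₁ ^ 2 + ℓ₁ ^ 2 / 4 := by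
      rw [div_add' _ _ _ hℓ₁sq.ne', le_div_iff₀ hℓ₁sq]; nlinarith
    have hS₀ℓ : S₀ ^ 2 / ℓ₁ ^ 2 ≤ S₀ ^ 2 / C₀ ^ 2 :=
      div_le_div_of_nonneg_left (sq_nonneg _) (by positivity) hC₀ℓ
    have hℓ₁S₀ : ℓ₁ ^ 2 / 4 ≤ 2 / √3 * S₀ := by
      rw [div_mul_eq_mul_div, le_div_iff₀ hs3]; nlinarith
    linarith
  calc ℓ₂ = √(ℓ₂ ^ 2) := (Real.sqrt_sq hℓ₂).symm
    _ ≤ √(2 / √3 * S₀ + S₀ ^ 2 / C₀ ^ 2) := Real.sqrt_le_sqrt hℓ₂sq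
    _ ≤ S₀ * √(2 / √3 * S₀ + S₀ ^ 2 / C₀ ^ 2) / (√3 / 2 * C₀ ^ 2) := by
      rw [le_div_iff₀ (by positivity), mul_comm S₀]
      exact mul_le_mul_of_nonneg_left hS₀ (Real.sqrt_nonneg _)

/-- A Riemannian torus (conformally flat, by uniformization) with systole `≥ C₀ > 0`
and area `≤ S₀` contains two noncontractible closed curves representing linearly
independent (non-homologous) classes in `H₁(T²;ℤ) ≅ ℤ²`, each of length at most
`C = max{ 2S₀/(√3 C₀), S₀·√((2/√3)S₀ + S₀²/C₀²) / ((√3/2)C₀²) }`. -/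
theorem two_short_nonhomologous_curves
    (u v : ℝ × ℝ) (hindep : u.1 * v.2 - u.2 * v.1 ≠ 0)
    (lam : ℝ × ℝ → ℝ) (hpos : ∀ p, 0 < lam p) (hcont : Continuous lam)
    (hper_u : ∀ p, lam (p + u) = lam p) (hper_v : ∀ p, lam (p + v) = lam p)
    (C₀ S₀ : ℝ) (hC₀ : 0 < C₀)
    (hsys : C₀ ≤ torusSystole u v lam)
    (harea : torusArea u v lam ≤ S₀) :
    ∃ (c₁ c₂ : ℝ → ℝ × ℝ) (m₁ n₁ m₂ n₂ : ℤ),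
      IsTorusLoop u v c₁ m₁ n₁ ∧ IsTorusLoop u v c₂ m₂ n₂ ∧
      (m₁, n₁) ≠ (0, 0) ∧ (m₂, n₂) ≠ (0, 0) ∧
      m₁ * n₂ - m₂ * n₁ ≠ 0 ∧
      torusLength lam c₁ ≤
        max (2 * S₀ / (Real.sqrt 3 * C₀))
          (S₀ * Real.sqrt (2 / Real.sqrt 3 * S₀ + S₀ ^ 2 / C₀ ^ 2) /
            (Real.sqrt 3 / 2 * C₀ ^ 2)) ∧
      torusLength lam c₂ ≤
        max (2 * S₀ / (Real.sqrt 3 * C₀))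
          (S₀ * Real.sqrt (2 / Real.sqrt 3 * S₀ + S₀ ^ 2 / C₀ ^ 2) /
            (Real.sqrt 3 / 2 * C₀ ^ 2)) := by
  have hlam : ∀ p, 0 ≤ lam p := fun p => (hpos p).le
  obtain ⟨q₁, q₂, hq₁, hq₂, hdet, hle, hdot⟩ := exists_reduced_basis hindep
  obtain ⟨c₁, hc₁, hlen₁⟩ := exists_torusLoop_length_le hlam hcont hper_u hper_v q₁
  obtain ⟨c₂, hc₂, hlen₂⟩ := exists_torusLoop_length_le hlam hcont hper_u hper_v q₂
  have hcross : planeCross (latticeVec u v q₁) (latticeVec u v q₂) = planeCross u v := by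
    rw [planeCross_latticeVec, hdet, Int.cast_one, one_mul]
  obtain ⟨hloewner, hlagrange⟩ := reduced_length_bounds hle hdot
    (hcross ▸ (abs_planeCross_mul_sq_torusMean_le_torusArea hcont).trans harea)
  have hsys₁ := hsys.trans ((torusSystole_le_torusLength hlam hc₁ hq₁).trans hlen₁)
  refine ⟨c₁, c₂, q₁.1, q₁.2, q₂.1, q₂.2, hc₁, hc₂, hq₁, hq₂, hdet ▸ one_ne_zero, ?_, ?_⟩
  · exact hlen₁.trans ((le_two_mul_div_of_sqrt_three_mul_sq_le hC₀ hsys₁ hloewner).trans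
      (le_max_left _ _))
  · exact hlen₂.trans ((le_mul_sqrt_div_of_sq_mul_sq_le hC₀ hsys₁
      (mul_nonneg (Real.sqrt_nonneg _) (torusMean_nonneg hlam)) hloewner hlagrange).trans
      (le_max_right _ _))
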